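/- Let C ⊆ Y be a nonempty compact subset, and assume in addition that for every compact K ⊆ Y only finitely many connected components of Y ∖ J·C have closure meeting K (this holds automatically in the paper's setting, where Y is a locally finite CW complex and C a finite subcomplex). Let U be a J-unbounded connected component of Y ∖ J·C. Then the stabilizer {j ∈ J : j • U = U} of U is an infinite subgroup of J. -/

import Mathlib

open Pointwise

/-- A subset of a topological space is *bounded* if it is contained in some compact set. -/
def BoundedSubset {X : Type*} [TopologicalSpace X] (S : Set X) : Prop :=
  ∃ K : Set X, IsCompact K ∧ S ⊆ K

/-- `U` is a connected component of the subspace `F` (of the ambient space `X`). -/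
def IsComponentOf {X : Type*} [TopologicalSpace X] (F U : Set X) : Prop :=
  ∃ x ∈ F, U = connectedComponentIn F x

/-- For `A ⊆ Y`, `orbitUnion J A` is `J·A = ⋃_{j ∈ J} j • A`. -/
def orbitUnion (J : Type*) {Y : Type*} [SMul J Y] (A : Set Y) : Set Y :=
  ⋃ j : J, j • A

/-- A subset of `Y` is `J`-bounded if it is contained in `J·D` for some compact `D ⊆ Y`. -/
def JBounded (J : Type*) {Y : Type*} [TopologicalSpace Y] [SMul J Y] (S : Set Y) : Prop :=
  ∃ D : Set Y, IsCompact D ∧ S ⊆ orbitUnion J D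

/-- `Y` is one-ended: it is not compact, and for every compact `K ⊆ Y` exactly one
connected component of `Y ∖ K` is unbounded. -/
def OneEnded (Y : Type*) [TopologicalSpace Y] : Prop :=
  ¬ IsCompact (Set.univ : Set Y) ∧
    ∀ K : Set Y, IsCompact K →
      ∃! U : Set Y, IsComponentOf Kᶜ U ∧ ¬ BoundedSubset U

/-!
Let `T` be the set of `j` for which `j • C` meets the closure of `U`. If `T` is infinite, the
components `j⁻¹ • U` (`j ∈ T`) of `Y ∖ J·C` all have closure meeting `C`; there are only finitely
many such components, so infinitely many `j ∈ T` give the same one, and the quotients of these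
`j` stabilise `U`. If `T` is finite, the frontier of `U` lies in the compact set
`K = ⋃_{j ∈ T} j • C ⊆ J·C`, so `U` is an unbounded component of `Y ∖ K`. In a one-ended space
the unbounded components of `Y ∖ K` and of `Y ∖ j • K` both contain the unbounded component of
`Y ∖ (K ∪ j • K)`, so `U` meets `j • U`; both being components of `Y ∖ J·C`, they are equal, and
the stabiliser is all of `J`.
-/

open Set

section Components

variable {X : Type*} [TopologicalSpace X] {F G U V : Set X}

lemma IsComponentOf.eq_connectedComponentIn (hU : IsComponentOf F U) {x : X} (hx : x ∈ U) :
    U = connectedComponentIn F x := by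
  obtain ⟨y, -, rfl⟩ := hU
  exact connectedComponentIn_eq hx

lemma IsComponentOf.subset (hU : IsComponentOf F U) : U ⊆ F := by
  obtain ⟨x, -, rfl⟩ := hU
  exact connectedComponentIn_subset F x

lemma IsComponentOf.nonempty (hU : IsComponentOf F U) : U.Nonempty := by
  obtain ⟨x, hx, rfl⟩ := hU
  exact ⟨x, mem_connectedComponentIn hx⟩

lemma IsComponentOf.isPreconnected (hU : IsComponentOf F U) : IsPreconnected U := by
  obtain ⟨x, -, rfl⟩ := hU
  exact isPreconnected_connectedComponentIn

lemma IsComponentOf.isOpen [LocallyConnectedSpace X] (hU : IsComponentOf F U) (hF : IsOpen F) :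
    IsOpen U := by
  obtain ⟨x, -, rfl⟩ := hU
  exact hF.connectedComponentIn

lemma IsComponentOf.eq_of_inter_nonempty (hU : IsComponentOf F U) (hV : IsComponentOf F V)
    (h : (U ∩ V).Nonempty) : U = V := by
  obtain ⟨x, hxU, hxV⟩ := h
  rw [hU.eq_connectedComponentIn hxU, hV.eq_connectedComponentIn hxV]

lemma IsComponentOf.closure_inter_subset (hU : IsComponentOf F U) : closure U ∩ F ⊆ U := by
  obtain ⟨x, hx, rfl⟩ := hU
  rintro y ⟨hyU, hyF⟩
  have hins : IsPreconnected (insert y (connectedComponentIn F x)) :=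
    isPreconnected_connectedComponentIn.subset_closure (subset_insert _ _)
      (insert_subset hyU subset_closure)
  exact hins.subset_connectedComponentIn (mem_insert_of_mem _ (mem_connectedComponentIn hx))
    (insert_subset hyF (connectedComponentIn_subset F x)) (mem_insert y _)

lemma IsComponentOf.of_superset (hU : IsComponentOf F U) (hUo : IsOpen U) (hFG : F ⊆ G)
    (hcl : closure U ∩ G ⊆ F) : IsComponentOf G U := by
  obtain ⟨u, hu⟩ := hU.nonempty
  refine ⟨u, hFG (hU.subset hu), subset_antisymm
    (hU.isPreconnected.subset_connectedComponentIn hu (hU.subset.trans hFG)) ?_⟩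
  exact isPreconnected_connectedComponentIn.subset_of_closure_inter_subset hUo
    ⟨u, mem_connectedComponentIn (hFG (hU.subset hu)), hu⟩
    fun x hx => hU.closure_inter_subset ⟨hx.1, hcl ⟨hx.1, connectedComponentIn_subset G u hx.2⟩⟩

lemma BoundedSubset.mono (hV : BoundedSubset V) (hUV : U ⊆ V) : BoundedSubset U := by
  obtain ⟨K, hK, hVK⟩ := hV
  exact ⟨K, hK, hUV.trans hVK⟩

lemma nonempty_of_not_boundedSubset (hU : ¬ BoundedSubset U) : U.Nonempty := by
  by_contra h
  exact hU ⟨∅, isCompact_empty, not_nonempty_iff_eq_empty.1 h ▸ subset_rfl⟩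

lemma OneEnded.subset_of_isComponentOf (hY : OneEnded X) {K L W : Set X} (hK : IsCompact K)
    (hKL : K ⊆ L) (hW : IsComponentOf Lᶜ W) (hWu : ¬ BoundedSubset W)
    (hV : IsComponentOf Kᶜ V) (hVu : ¬ BoundedSubset V) : W ⊆ V := by
  obtain ⟨w, hw⟩ := nonempty_of_not_boundedSubset hWu
  have hWw : W ⊆ connectedComponentIn Kᶜ w :=
    hW.eq_connectedComponentIn hw ▸ connectedComponentIn_mono w (compl_subset_compl.2 hKL)
  have hwK : w ∈ Kᶜ := fun hwK => hW.subset hw (hKL hwK)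
  rw [(hY.2 K hK).unique ⟨hV, hVu⟩ ⟨⟨w, hwK, rfl⟩, fun h => hWu (h.mono hWw)⟩]
  exact hWw

lemma OneEnded.inter_nonempty (hY : OneEnded X) {K L : Set X} (hK : IsCompact K)
    (hL : IsCompact L) (hU : IsComponentOf Kᶜ U) (hUu : ¬ BoundedSubset U)
    (hV : IsComponentOf Lᶜ V) (hVu : ¬ BoundedSubset V) : (U ∩ V).Nonempty := by
  obtain ⟨W, ⟨hW, hWu⟩, -⟩ := hY.2 (K ∪ L) (hK.union hL)
  obtain ⟨w, hw⟩ := nonempty_of_not_boundedSubset hWu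
  exact ⟨w, hY.subset_of_isComponentOf hK subset_union_left hW hWu hU hUu hw,
    hY.subset_of_isComponentOf hL subset_union_right hW hWu hV hVu hw⟩

end Components

lemma Set.Infinite.infinite_stabilizer_of_inv_smul_mem {G α : Type*} [Group G] [MulAction G α]
    {x : α} {T : Set G} {S : Set α} (hT : T.Infinite) (hS : S.Finite)
    (hTS : ∀ g ∈ T, g⁻¹ • x ∈ S) : {g : G | g • x = x}.Infinite := by
  obtain ⟨s, hs⟩ : ∃ s, {g ∈ T | g⁻¹ • x = s}.Infinite := by
    by_contra! h
    exact hT ((hS.biUnion fun s _ => h s).subset fun g hg => mem_biUnion (hTS g hg) ⟨hg, rfl⟩)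
  obtain ⟨g₀, -, rfl⟩ := hs.nonempty
  refine (hs.image (mul_left_injective g₀⁻¹).injOn).mono ?_
  rintro _ ⟨g, ⟨-, hg⟩, rfl⟩
  change (g * g₀⁻¹) • x = x
  rw [mul_smul, ← hg, smul_inv_smul]

section Action

variable {J Y : Type*} [Group J] [MulAction J Y] {A C F K S U : Set Y}

lemma smul_subset_orbitUnion (j : J) : j • A ⊆ orbitUnion J A :=
  subset_iUnion (fun i : J => i • A) j

lemma smul_orbitUnion (j : J) : j • orbitUnion J A = orbitUnion J A := by
  simp only [orbitUnion, smul_set_iUnion, smul_smul]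
  exact (mul_left_surjective j).iUnion_comp (· • A)

lemma inter_orbitUnion_subset_biUnion :
    S ∩ orbitUnion J A ⊆ ⋃ j ∈ {j : J | (S ∩ j • A).Nonempty}, j • A := by
  rintro x ⟨hxS, hxA⟩
  obtain ⟨j, hj⟩ := mem_iUnion.1 hxA
  exact mem_biUnion ⟨x, hxS, hj⟩ hj

variable [TopologicalSpace Y]

lemma BoundedSubset.jBounded (hS : BoundedSubset S) : JBounded J S := by
  obtain ⟨K, hK, hSK⟩ := hS
  exact ⟨K, hK, hSK.trans (by simpa using smul_subset_orbitUnion (A := K) (1 : J))⟩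

lemma locallyFinite_smul_of_isCompact [LocallyCompactSpace Y]
    (hpd : ∀ K : Set Y, IsCompact K → {j : J | ((j • K) ∩ K).Nonempty}.Finite)
    (hC : IsCompact C) : LocallyFinite fun j : J => j • C := by
  intro y
  obtain ⟨L, hL, hLy⟩ := exists_compact_mem_nhds y
  refine ⟨L, hLy, (hpd _ (hC.union hL)).subset ?_⟩
  rintro j ⟨z, hzC, hzL⟩
  exact ⟨z, smul_set_mono subset_union_left hzC, Or.inr hzL⟩

variable [ContinuousConstSMul J Y]

lemma BoundedSubset.smul (hS : BoundedSubset S) (j : J) : BoundedSubset (j • S) := by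
  obtain ⟨K, hK, hSK⟩ := hS
  exact ⟨j • K, hK.smul j, smul_set_mono hSK⟩

lemma boundedSubset_smul_iff {j : J} : BoundedSubset (j • S) ↔ BoundedSubset S :=
  ⟨fun h => by simpa using h.smul j⁻¹, fun h => h.smul j⟩

lemma IsComponentOf.smul (hU : IsComponentOf F U) (j : J) : IsComponentOf (j • F) (j • U) := by
  obtain ⟨x, hx, rfl⟩ := hU
  refine ⟨j • x, smul_mem_smul_set hx, ?_⟩
  simpa using ((Homeomorph.smul j : Y ≃ₜ Y).image_connectedComponentIn hx)

lemma isClosed_orbitUnion [LocallyCompactSpace Y] [T2Space Y]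
    (hpd : ∀ K : Set Y, IsCompact K → {j : J | ((j • K) ∩ K).Nonempty}.Finite)
    (hC : IsCompact C) : IsClosed (orbitUnion J C) :=
  (locallyFinite_smul_of_isCompact hpd hC).isClosed_iUnion fun j => (hC.smul j).isClosed

lemma OneEnded.inter_smul_nonempty (hY : OneEnded Y) (hK : IsCompact K)
    (hU : IsComponentOf Kᶜ U) (hUu : ¬ BoundedSubset U) (j : J) : (U ∩ j • U).Nonempty :=
  hY.inter_nonempty hK (hK.smul j) hU hUu (by simpa only [smul_set_compl] using hU.smul j)
    (boundedSubset_smul_iff.not.2 hUu)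

lemma IsComponentOf.infinite_stabilizer_of_infinite_closure_meets
    (hFinv : ∀ j : J, j • F = F) (hU : IsComponentOf F U)
    (hfin : {V : Set Y | IsComponentOf F V ∧ (closure V ∩ C).Nonempty}.Finite)
    (hT : {j : J | (closure U ∩ j • C).Nonempty}.Infinite) : {j : J | j • U = U}.Infinite :=
  hT.infinite_stabilizer_of_inv_smul_mem hfin fun j hj =>
    ⟨hFinv j⁻¹ ▸ hU.smul j⁻¹, by simpa [closure_smul, smul_set_inter] using hj.smul_set (a := j⁻¹)⟩

lemma OneEnded.infinite_stabilizer_of_finite_closure_meets [LocallyConnectedSpace Y] [Infinite J]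
    (hY : OneEnded Y) (hC : IsCompact C) (hF : IsOpen (orbitUnion J C)ᶜ)
    (hU : IsComponentOf (orbitUnion J C)ᶜ U) (hUu : ¬ BoundedSubset U)
    (hT : {j : J | (closure U ∩ j • C).Nonempty}.Finite) : {j : J | j • U = U}.Infinite := by
  set K := ⋃ j ∈ {j : J | (closure U ∩ j • C).Nonempty}, j • C
  have hK : IsCompact K := hT.isCompact_biUnion fun j _ => hC.smul j
  have hKC : K ⊆ orbitUnion J C := iUnion₂_subset fun j _ => smul_subset_orbitUnion j
  have hUK : IsComponentOf Kᶜ U := hU.of_superset (hU.isOpen hF) (compl_subset_compl.2 hKC)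
    fun x ⟨hxU, hxK⟩ hxC => hxK (inter_orbitUnion_subset_biUnion ⟨hxU, hxC⟩)
  refine infinite_univ.mono fun j _ => (hU.eq_of_inter_nonempty ?_
    (hY.inter_smul_nonempty hK hUK hUu j)).symm
  simpa only [smul_set_compl, smul_orbitUnion] using hU.smul j

end Action

theorem stmt9_general {Y : Type*} [TopologicalSpace Y]
    [LocallyCompactSpace Y] [LocallyConnectedSpace Y] [T2Space Y]
    (hY : OneEnded Y)
    {J : Type*} [Group J] [Infinite J] [MulAction J Y]
    (hcont : ∀ j : J, Continuous fun y : Y => j • y)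
    (hpd : ∀ K : Set Y, IsCompact K → {j : J | ((j • K) ∩ K).Nonempty}.Finite)
    (C : Set Y) (hC : IsCompact C)
    (hloc : ∀ K : Set Y, IsCompact K →
      {V : Set Y | IsComponentOf (orbitUnion J C)ᶜ V ∧ (closure V ∩ K).Nonempty}.Finite)
    (U : Set Y) (hU : IsComponentOf (orbitUnion J C)ᶜ U)
    (hUnb : ¬ JBounded J U) :
    {j : J | j • U = U}.Infinite := by
  have : ContinuousConstSMul J Y := ⟨hcont⟩
  by_cases hT : {j : J | (closure U ∩ j • C).Nonempty}.Finite
  · exact hY.infinite_stabilizer_of_finite_closure_meets hC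
      (isClosed_orbitUnion hpd hC).isOpen_compl hU (fun h => hUnb h.jBounded) hT
  · exact hU.infinite_stabilizer_of_infinite_closure_meets
      (fun j => by rw [smul_set_compl, smul_orbitUnion]) (hloc C hC) hT

/-- Let `Y` be a connected, locally compact, locally connected, Hausdorff, one-ended space,
and let the infinite group `J` act on `Y` by homeomorphisms, properly discontinuously.
Let `C ⊆ Y` be nonempty and compact, and assume in addition that for every compact `K ⊆ Y`
only finitely many connected components of `Y ∖ J·C` have closure meeting `K`.  If `U` is a
`J`-unbounded connected component of `Y ∖ J·C`, then the stabilizer `{j ∈ J : j • U = U}`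
of `U` is an infinite subgroup of `J`. -/
theorem stmt9 {Y : Type*} [TopologicalSpace Y] [ConnectedSpace Y]
    [LocallyCompactSpace Y] [LocallyConnectedSpace Y] [T2Space Y]
    (hY : OneEnded Y)
    {J : Type*} [Group J] [Infinite J] [MulAction J Y]
    (hcont : ∀ j : J, Continuous fun y : Y => j • y)
    (hpd : ∀ K : Set Y, IsCompact K → {j : J | ((j • K) ∩ K).Nonempty}.Finite)
    (C : Set Y) (hCne : C.Nonempty) (hC : IsCompact C)
    (hloc : ∀ K : Set Y, IsCompact K →
      {V : Set Y | IsComponentOf (orbitUnion J C)ᶜ V ∧ (closure V ∩ K).Nonempty}.Finite)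
    (U : Set Y) (hU : IsComponentOf (orbitUnion J C)ᶜ U)
    (hUnb : ¬ JBounded J U) :
    {j : J | j • U = U}.Infinite :=
  stmt9_general hY hcont hpd C hC hloc U hU hUnb
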